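/- arXiv:2310.16055 — 2 statements merged into one kernel-verified Lean document; each statement's English description precedes it below -/
import Mathlib

section
/- Let f = (f_1,…,f_n) and g = (g_1,…,g_n) be nonnegative elements of (L¹(D_u))^n with ‖f‖₁ ≤ c and ‖g‖₁ ≤ c for some constant c > 0. Then, for every fixed time t ∈ [0,T], Σ_{i=1}^n ∫_{D_u} |f_i(u) Ω_i[f](t,u) − g_i(u) Ω_i[g](t,u)| du ≤ 2ηc ‖f − g‖₁ + 2Γc ‖f − g‖₁ + Θ ‖f − g‖₁. -/
/-!
Split `Ω_i[f] = L_i[f] + Θ_i` with `L_i` linear in `f` and `|L_i[p]| ≤ (η + Γ) ‖p‖₁` pointwise.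
Then `f_i Ω_i[f] - g_i Ω_i[g] = (f_i - g_i) Ω_i[f] + g_i L_i[f - g]`, so the integrand is at most
`((η + Γ) c + Θ) |f_i - g_i| + (η + Γ) ‖f - g‖₁ |g_i|`; integrating and using `‖g‖₁ ≤ c` gives
the bound.
-/

open MeasureTheory

/-- The operator `Ω_i[f](t,u)`. -/
noncomputable def omegaOp (n : ℕ) (D : Set ℝ)
    (η : Fin n → Fin n → ℝ → ℝ → ℝ)
    (Γ : Fin n → Fin n → ℝ → ℝ) (Θ : Fin n → ℝ → ℝ)
    (t : ℝ) (f : Fin n → ℝ → ℝ) (i : Fin n) (u : ℝ) : ℝ :=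
  (∑ k : Fin n, ∫ ua in D, η i k u ua * f k ua) +
    ((∑ h ∈ Finset.univ.erase i, Γ i h t * ∫ ua in D, f h ua) + Θ i t)

/-- The `L¹` norm `‖f‖₁ = Σ_i ∫_{D} |f_i(u)| du`. -/
noncomputable def l1norm (n : ℕ) (D : Set ℝ) (f : Fin n → ℝ → ℝ) : ℝ :=
  ∑ i : Fin n, ∫ u in D, |f i u|

lemma abs_integral_mul_le_mul_integral_abs {α : Type*} [MeasurableSpace α] {μ : Measure α}
    {k p : α → ℝ} {K : ℝ} (hp : Integrable p μ) (hk : ∀ x, |k x| ≤ K) :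
    |∫ x, k x * p x ∂μ| ≤ K * ∫ x, |p x| ∂μ := by
  rw [← integral_const_mul K fun x => |p x|, ← Real.norm_eq_abs]
  refine norm_integral_le_of_norm_le (hp.abs.const_mul K) (ae_of_all _ fun x => ?_)
  rw [Real.norm_eq_abs, abs_mul]
  exact mul_le_mul_of_nonneg_right (hk x) (abs_nonneg _)

lemma l1norm_le_of_abs_le {n : ℕ} {D : Set ℝ} {F p q : Fin n → ℝ → ℝ} {A B : ℝ}
    (hp : ∀ i, IntegrableOn (p i) D) (hq : ∀ i, IntegrableOn (q i) D)
    (hF : ∀ i u, |F i u| ≤ A * |p i u| + B * |q i u|) :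
    l1norm n D F ≤ A * l1norm n D p + B * l1norm n D q := by
  simp only [l1norm, Finset.mul_sum, ← Finset.sum_add_distrib, ← integral_const_mul]
  refine Finset.sum_le_sum fun i _ => ?_
  have hpi : IntegrableOn (fun u => A * |p i u|) D := (hp i).abs.const_mul A
  have hqi : IntegrableOn (fun u => B * |q i u|) D := (hq i).abs.const_mul B
  rw [← integral_add hpi hqi]
  exact integral_mono_of_nonneg (ae_of_all _ fun u => abs_nonneg _) (hpi.add hqi)
    (ae_of_all _ (hF i))

lemma abs_mul_sub_mul_le (a b x y : ℝ) : |a * x - b * y| ≤ |x| * |a - b| + |x - y| * |b| := by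
  rw [show a * x - b * y = x * (a - b) + (x - y) * b by ring, ← abs_mul, ← abs_mul]
  exact abs_add_le _ _

noncomputable def omegaLinOp (n : ℕ) (D : Set ℝ) (η : Fin n → Fin n → ℝ → ℝ → ℝ)
    (Γ : Fin n → Fin n → ℝ → ℝ) (t : ℝ) (f : Fin n → ℝ → ℝ) (i : Fin n) (u : ℝ) : ℝ :=
  (∑ k : Fin n, ∫ ua in D, η i k u ua * f k ua) +
    ∑ h ∈ Finset.univ.erase i, Γ i h t * ∫ ua in D, f h ua

section omegaLinOp

variable {n : ℕ} {D : Set ℝ} {η : Fin n → Fin n → ℝ → ℝ → ℝ} {Γ : Fin n → Fin n → ℝ → ℝ}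
  {t ηmax Γmax : ℝ}

lemma omegaOp_eq_omegaLinOp_add (Θ : Fin n → ℝ → ℝ) (f : Fin n → ℝ → ℝ) (i : Fin n) (u : ℝ) :
    omegaOp n D η Γ Θ t f i u = omegaLinOp n D η Γ t f i u + Θ i t :=
  (add_assoc _ _ _).symm

lemma omegaLinOp_sub (hηmeas : ∀ i k u, Measurable (η i k u))
    (hηbd : ∀ i k u ua, |η i k u ua| ≤ ηmax)
    {f g : Fin n → ℝ → ℝ} (hf : ∀ i, IntegrableOn (f i) D) (hg : ∀ i, IntegrableOn (g i) D)
    (i : Fin n) (u : ℝ) :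
    omegaLinOp n D η Γ t f i u - omegaLinOp n D η Γ t g i u =
      omegaLinOp n D η Γ t (fun k ua => f k ua - g k ua) i u := by
  have hηf : ∀ p : ℝ → ℝ, IntegrableOn p D → ∀ k,
      IntegrableOn (fun ua => η i k u ua * p ua) D := fun p hp k =>
    hp.bdd_mul (hηmeas i k u).aestronglyMeasurable (ae_of_all _ (hηbd i k u))
  simp only [omegaLinOp, mul_sub, integral_sub (hηf _ (hf _) _) (hηf _ (hg _) _),
    integral_sub (hf _) (hg _), Finset.sum_sub_distrib]
  ring

lemma abs_omegaLinOp_le (hηbd : ∀ i k u ua, |η i k u ua| ≤ ηmax)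
    (hΓbd : ∀ i h, |Γ i h t| ≤ Γmax) {p : Fin n → ℝ → ℝ} (hp : ∀ i, IntegrableOn (p i) D)
    (i : Fin n) (u : ℝ) :
    |omegaLinOp n D η Γ t p i u| ≤ (ηmax + Γmax) * l1norm n D p := by
  have hη : |∑ k : Fin n, ∫ ua in D, η i k u ua * p k ua| ≤ ηmax * l1norm n D p := by
    rw [l1norm, Finset.mul_sum]
    exact (Finset.abs_sum_le_sum_abs _ _).trans <| Finset.sum_le_sum fun k _ =>
      abs_integral_mul_le_mul_integral_abs (hp k) (hηbd i k u)
  have hΓ : |∑ h ∈ Finset.univ.erase i, Γ i h t * ∫ ua in D, p h ua| ≤ Γmax * l1norm n D p := by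
    rw [l1norm, Finset.mul_sum]
    refine (Finset.abs_sum_le_sum_abs _ _).trans <|
      (Finset.sum_le_sum_of_subset_of_nonneg (Finset.subset_univ _)
        fun _ _ _ => abs_nonneg _).trans <| Finset.sum_le_sum fun h _ => ?_
    rw [abs_mul]
    exact mul_le_mul (hΓbd i h) abs_integral_le_integral_abs (abs_nonneg _)
      ((abs_nonneg _).trans (hΓbd i h))
  rw [omegaLinOp, add_mul]
  exact (abs_add_le _ _).trans (add_le_add hη hΓ)

end omegaLinOp

theorem omega_lipschitz_general
    (n : ℕ) (D : Set ℝ)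
    (η : Fin n → Fin n → ℝ → ℝ → ℝ) (ηmax : ℝ) (hηpos : 0 < ηmax)
    (hηmeas : ∀ h k, Measurable (fun p : ℝ × ℝ => η h k p.1 p.2))
    (hηnn : ∀ h k us ua, 0 ≤ η h k us ua)
    (hηbd : ∀ h k us ua, η h k us ua ≤ ηmax)
    (T : ℝ)
    (Γ : Fin n → Fin n → ℝ → ℝ) (Θ : Fin n → ℝ → ℝ)
    (Γmax Θmax : ℝ) (hΓpos : 0 < Γmax)
    (hΓbd : ∀ i h, ∀ t ∈ Set.Icc (0:ℝ) T, |Γ i h t| ≤ Γmax)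
    (hΘbd : ∀ i, ∀ t ∈ Set.Icc (0:ℝ) T, |Θ i t| ≤ Θmax)
    (f g : Fin n → ℝ → ℝ)
    (hfint : ∀ i, IntegrableOn (f i) D) (hgint : ∀ i, IntegrableOn (g i) D)
    (c : ℝ)
    (hfc : l1norm n D f ≤ c) (hgc : l1norm n D g ≤ c) :
    ∀ t ∈ Set.Icc (0:ℝ) T,
      (∑ i : Fin n, ∫ u in D,
          |f i u * omegaOp n D η Γ Θ t f i u - g i u * omegaOp n D η Γ Θ t g i u|) ≤
        2 * ηmax * c * l1norm n D (fun i u => f i u - g i u) +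
          2 * Γmax * c * l1norm n D (fun i u => f i u - g i u) +
          Θmax * l1norm n D (fun i u => f i u - g i u) := by
  intro t ht
  set N := l1norm n D (fun i u => f i u - g i u)
  have hN : 0 ≤ N := Finset.sum_nonneg fun _ _ => integral_nonneg fun _ => abs_nonneg _
  have hηsec : ∀ i k u, Measurable (η i k u) := fun i k _ => (hηmeas i k).of_uncurry_left
  have hηabs : ∀ i k u ua, |η i k u ua| ≤ ηmax := fun i k u ua =>
    (abs_of_nonneg (hηnn i k u ua)).trans_le (hηbd i k u ua)
  have hΓabs : ∀ i h, |Γ i h t| ≤ Γmax := fun i h => hΓbd i h t ht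
  have hK : 0 ≤ ηmax + Γmax := add_nonneg hηpos.le hΓpos.le
  have hΩf : ∀ i u, |omegaOp n D η Γ Θ t f i u| ≤ (ηmax + Γmax) * c + Θmax := fun i u => by
    rw [omegaOp_eq_omegaLinOp_add]
    exact (abs_add_le _ _).trans <| add_le_add
      ((abs_omegaLinOp_le hηabs hΓabs hfint i u).trans (mul_le_mul_of_nonneg_left hfc hK))
      (hΘbd i t ht)
  have hΩsub : ∀ i u, |omegaOp n D η Γ Θ t f i u - omegaOp n D η Γ Θ t g i u| ≤
      (ηmax + Γmax) * N := fun i u => by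
    rw [omegaOp_eq_omegaLinOp_add, omegaOp_eq_omegaLinOp_add, add_sub_add_right_eq_sub,
      omegaLinOp_sub hηsec hηabs hfint hgint]
    exact abs_omegaLinOp_le hηabs hΓabs (fun i => (hfint i).sub (hgint i)) i u
  calc l1norm n D
          (fun i u => f i u * omegaOp n D η Γ Θ t f i u - g i u * omegaOp n D η Γ Θ t g i u)
      ≤ ((ηmax + Γmax) * c + Θmax) * N + (ηmax + Γmax) * N * l1norm n D g :=
        l1norm_le_of_abs_le (fun i => (hfint i).sub (hgint i)) hgint fun i u =>
          (abs_mul_sub_mul_le _ _ _ _).trans (by gcongr; exacts [hΩf i u, hΩsub i u])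
    _ ≤ ((ηmax + Γmax) * c + Θmax) * N + (ηmax + Γmax) * N * c := by gcongr
    _ = 2 * ηmax * c * N + 2 * Γmax * c * N + Θmax * N := by ring

/-- Lipschitz-type estimate for `f ↦ f_i · Ω_i[f]`:
`Σ_i ∫ |f_i Ω_i[f] − g_i Ω_i[g]| ≤ 2ηc‖f−g‖₁ + 2Γc‖f−g‖₁ + Θ‖f−g‖₁`. -/
theorem omega_lipschitz
    (n : ℕ) (hn : 1 ≤ n) (D : Set ℝ) (hD : MeasurableSet D)
    (hDb : Bornology.IsBounded D)
    (η : Fin n → Fin n → ℝ → ℝ → ℝ) (ηmax : ℝ) (hηpos : 0 < ηmax)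
    (hηmeas : ∀ h k, Measurable (fun p : ℝ × ℝ => η h k p.1 p.2))
    (hηnn : ∀ h k us ua, 0 ≤ η h k us ua)
    (hηbd : ∀ h k us ua, η h k us ua ≤ ηmax)
    (T : ℝ) (hT : 0 < T)
    (Γ : Fin n → Fin n → ℝ → ℝ) (Θ : Fin n → ℝ → ℝ)
    (Γmax Θmax : ℝ) (hΓpos : 0 < Γmax) (hΘpos : 0 < Θmax)
    (hΓC1 : ∀ i h, ContDiffOn ℝ 1 (Γ i h) (Set.Icc 0 T))
    (hΘC1 : ∀ i, ContDiffOn ℝ 1 (Θ i) (Set.Icc 0 T))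
    (hΓbd : ∀ i h, ∀ t ∈ Set.Icc (0:ℝ) T, |Γ i h t| ≤ Γmax)
    (hΘbd : ∀ i, ∀ t ∈ Set.Icc (0:ℝ) T, |Θ i t| ≤ Θmax)
    (f g : Fin n → ℝ → ℝ)
    (hfint : ∀ i, IntegrableOn (f i) D) (hgint : ∀ i, IntegrableOn (g i) D)
    (hfnn : ∀ i u, 0 ≤ f i u) (hgnn : ∀ i u, 0 ≤ g i u)
    (c : ℝ) (hc : 0 < c)
    (hfc : l1norm n D f ≤ c) (hgc : l1norm n D g ≤ c) :
    ∀ t ∈ Set.Icc (0:ℝ) T,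
      (∑ i : Fin n, ∫ u in D,
          |f i u * omegaOp n D η Γ Θ t f i u - g i u * omegaOp n D η Γ Θ t g i u|) ≤
        2 * ηmax * c * l1norm n D (fun i u => f i u - g i u) +
          2 * Γmax * c * l1norm n D (fun i u => f i u - g i u) +
          Θmax * l1norm n D (fun i u => f i u - g i u) :=
  omega_lipschitz_general n D η ηmax hηpos hηmeas hηnn hηbd T Γ Θ Γmax Θmax hΓpos hΓbd hΘbd f g
    hfint hgint c hfc hgc
end

section
/- (Theorem 2, instability of E₂, eigenvalue form.) The Jacobian matrix of the macroscopic vector field at the equilibrium E₂ = (0, d_M/η23, τ_N/η23, 0) is the 4×4 matrix with rows (σ13 τ_N/η23, 0, 0, 0), (−d_M η12/η23, 0, −d_M, 0), (d_M η12/η23, τ_N, 0, 0), (0, 0, 0, −d_T), its characteristic polynomial in the variable λ factors as P₂(λ) = (−d_T − λ)(σ13 τ_N/η23 − λ)(λ² + τ_N d_M), and hence it has the strictly positive real eigenvalue σ13 τ_N/η23 > 0. -/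
/-!
At `E₂` the Jacobian is block lower triangular with diagonal blocks `σ13 τ_N/η23`,
`[[0, -d_M], [τ_N, 0]]` and `-d_T`, so its characteristic polynomial is the product of theirs.
A root `μ` of the characteristic polynomial is an eigenvalue because `μ • 1 - J` is then singular.
-/

open Polynomial

/-- Jacobian matrix of the macroscopic autoimmune vector field at a point
`(A, N, M, T)`. -/
def macroJacobian (σ13 σ14 η12 η23 τN dM σ41 dT : ℝ)
    (A N M T : ℝ) : Matrix (Fin 4) (Fin 4) ℝ :=
  !![σ13 * M - σ14 * T, 0, σ13 * A, -σ14 * A;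
     -η12 * N, -η12 * A - η23 * M + τN, -η23 * N, 0;
     η12 * N, η12 * A + η23 * M, η23 * N - dM, 0;
     σ41 * T, 0, 0, -dT + σ41 * A]

open Matrix

theorem Matrix.exists_mulVec_eq_smul_of_eval_charpoly_eq_zero {n R : Type*} [Fintype n]
    [DecidableEq n] [CommRing R] [IsDomain R] {A : Matrix n n R} {μ : R}
    (h : A.charpoly.eval μ = 0) : ∃ v ≠ 0, A *ᵥ v = μ • v := by
  rw [eval_charpoly] at h
  obtain ⟨v, hv, hμv⟩ := exists_mulVec_eq_zero_iff.mpr h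
  refine ⟨v, hv, ?_⟩
  rw [sub_mulVec, sub_eq_zero] at hμv
  simp only [← hμv, scalar_apply, diagonal_const_mulVec]

theorem charpoly_fin_four {R : Type*} [CommRing R] (a p q r s e : R) :
    (!![a, 0, 0, 0; p, 0, q, 0; r, s, 0, 0; 0, 0, 0, e] : Matrix (Fin 4) (Fin 4) R).charpoly =
      (X - C a) * (X - C e) * (X ^ 2 - C (q * s)) := by
  have hchar : charmatrix !![a, 0, 0, 0; p, 0, q, 0; r, s, 0, 0; 0, 0, 0, e] =
      !![X - C a, 0, 0, 0; -C p, X, -C q, 0; -C r, -C s, X, 0; 0, 0, 0, X - C e] := by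
    ext i j
    fin_cases i <;> fin_cases j <;> simp
  rw [charpoly, hchar]
  simp only [det_succ_row_zero, of_apply, submatrix_apply, cons_val,
    det_unique, Fin.default_eq_zero, Fin.reduceSucc, Fin.sum_univ_succ, Fin.coe_ofNat_eq_mod,
    Fin.zero_succAbove, ne_eq, Fin.succ_ne_zero, not_false_eq_true, Fin.succAbove_ne_zero_zero,
    Fin.succ_succAbove_one, map_mul]
  ring

theorem macroJacobian_E2 (σ13 σ14 η12 η23 τN dM σ41 dT : ℝ) (hη23 : η23 ≠ 0) :
    macroJacobian σ13 σ14 η12 η23 τN dM σ41 dT 0 (dM / η23) (τN / η23) 0 =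
      !![σ13 * τN / η23, 0, 0, 0;
         -(dM * η12 / η23), 0, -dM, 0;
         dM * η12 / η23, τN, 0, 0;
         0, 0, 0, -dT] := by
  have hM : η23 * (τN / η23) = τN := mul_div_cancel₀ τN hη23
  have hN : η23 * (dM / η23) = dM := mul_div_cancel₀ dM hη23
  rw [macroJacobian]
  simp only [neg_mul, hM, hN]
  simp [mul_div_assoc', div_mul_eq_mul_div, mul_comm η12]

theorem jacobian_E2_charpoly_and_positive_eigenvalue_general
    (σ13 σ14 η12 η23 τN dM σ41 dT : ℝ)
    (hσ13 : 0 < σ13) (hη23 : 0 < η23)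
    (hτN : 0 < τN) :
    macroJacobian σ13 σ14 η12 η23 τN dM σ41 dT 0 (dM / η23) (τN / η23) 0 =
      !![σ13 * τN / η23, 0, 0, 0;
         -(dM * η12 / η23), 0, -dM, 0;
         dM * η12 / η23, τN, 0, 0;
         0, 0, 0, -dT] ∧
    (∀ lam : ℝ,
      (macroJacobian σ13 σ14 η12 η23 τN dM σ41 dT 0 (dM / η23) (τN / η23) 0).charpoly.eval lam =
        (-dT - lam) * (σ13 * τN / η23 - lam) * (lam ^ 2 + τN * dM)) ∧
    0 < σ13 * τN / η23 ∧
    ∃ v : Fin 4 → ℝ, v ≠ 0 ∧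
      (macroJacobian σ13 σ14 η12 η23 τN dM σ41 dT 0 (dM / η23) (τN / η23) 0).mulVec v =
        (σ13 * τN / η23) • v := by
  have hJ := macroJacobian_E2 σ13 σ14 η12 η23 τN dM σ41 dT hη23.ne'
  have hchar : ∀ lam : ℝ,
      (macroJacobian σ13 σ14 η12 η23 τN dM σ41 dT 0 (dM / η23) (τN / η23) 0).charpoly.eval lam =
        (-dT - lam) * (σ13 * τN / η23 - lam) * (lam ^ 2 + τN * dM) := by
    intro lam
    rw [hJ, charpoly_fin_four]
    simp only [eval_mul, eval_sub, eval_pow, eval_X, eval_C]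
    ring
  refine ⟨hJ, hchar, by positivity, exists_mulVec_eq_smul_of_eval_charpoly_eq_zero ?_⟩
  rw [hchar, sub_self, mul_zero, zero_mul]

/-- Theorem 2 (instability of `E₂`, eigenvalue form): the Jacobian at
`E₂ = (0, d_M/η23, τ_N/η23, 0)` is the displayed matrix, its characteristic
polynomial factors as `P₂(λ) = (−d_T − λ)(σ13 τ_N/η23 − λ)(λ² + τ_N d_M)`, and it
has the strictly positive real eigenvalue `σ13 τ_N/η23 > 0`. -/
theorem jacobian_E2_charpoly_and_positive_eigenvalue
    (σ13 σ14 η12 η23 τN dM σ41 dT : ℝ)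
    (hσ13 : 0 < σ13) (hσ14 : 0 < σ14) (hη12 : 0 < η12) (hη23 : 0 < η23)
    (hτN : 0 < τN) (hdM : 0 < dM) (hσ41 : 0 < σ41) (hdT : 0 < dT) :
    macroJacobian σ13 σ14 η12 η23 τN dM σ41 dT 0 (dM / η23) (τN / η23) 0 =
      !![σ13 * τN / η23, 0, 0, 0;
         -(dM * η12 / η23), 0, -dM, 0;
         dM * η12 / η23, τN, 0, 0;
         0, 0, 0, -dT] ∧
    (∀ lam : ℝ,
      (macroJacobian σ13 σ14 η12 η23 τN dM σ41 dT 0 (dM / η23) (τN / η23) 0).charpoly.eval lam =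
        (-dT - lam) * (σ13 * τN / η23 - lam) * (lam ^ 2 + τN * dM)) ∧
    0 < σ13 * τN / η23 ∧
    ∃ v : Fin 4 → ℝ, v ≠ 0 ∧
      (macroJacobian σ13 σ14 η12 η23 τN dM σ41 dT 0 (dM / η23) (τN / η23) 0).mulVec v =
        (σ13 * τN / η23) • v :=
  jacobian_E2_charpoly_and_positive_eigenvalue_general σ13 σ14 η12 η23 τN dM σ41 dT hσ13 hη23 hτN
end
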